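/- arXiv:math/0007179 — 2 statements merged into one kernel-verified Lean document; each statement's English description precedes it below -/
import Mathlib

section
/- Let k be an infinite field and U = k[SL₂] graded by ℤ/2 with the generators x₁₁, x₁₂, x₂₁, x₂₂ in odd degree, and let O = U₀ be the even part. Then U is a faithfully flat O-module. -/
open MvPolynomial

set_option synthInstance.maxHeartbeats 1000000
set_option maxHeartbeats 1000000

/-- The coordinate ring `k[SL₂] = k[x₁₁,x₁₂,x₂₁,x₂₂]/(x₁₁x₂₂ - x₁₂x₂₁ - 1)`. -/
abbrev SL2CoordRing (k : Type*) [Field k] : Type _ :=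
  MvPolynomial (Fin 2 × Fin 2) k ⧸
    Ideal.span {(X (0,0) * X (1,1) - X (0,1) * X (1,0) - 1 : MvPolynomial (Fin 2 × Fin 2) k)}

/-- The images of the generators `xᵢⱼ` in `k[SL₂]`. -/
noncomputable def sl2Gen (k : Type*) [Field k] (p : Fin 2 × Fin 2) : SL2CoordRing k :=
  Ideal.Quotient.mk _ (X p)

/-- The even part `U₀` of the `ℤ/2`-grading of `k[SL₂]` (generators odd): the
`k`-subalgebra generated by the products of two generators `xᵢⱼxₖₗ`. -/
noncomputable def sl2EvenPart (k : Type*) [Field k] : Subalgebra k (SL2CoordRing k) :=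
  Algebra.adjoin k {u | ∃ p q : Fin 2 × Fin 2, u = sl2Gen k p * sl2Gen k q}

section Aux

open DirectSum

variable (k : Type) [Field k]

noncomputable def SLw : Fin 2 × Fin 2 → ZMod 2 := fun _ => 1

noncomputable abbrev SLA := weightedHomogeneousSubmodule k (SLw)

noncomputable instance : GradedAlgebra (SLA k) := weightedGradedAlgebra k SLw

noncomputable def SLP (i : ZMod 2) (f : MvPolynomial (Fin 2 × Fin 2) k) :
    MvPolynomial (Fin 2 × Fin 2) k := DirectSum.decompose (SLA k) f i

lemma SLP_mem (i f) : SLP k i f ∈ SLA k i := (DirectSum.decompose (SLA k) f i).2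

lemma SLP_add (i f g) : SLP k i (f + g) = SLP k i f + SLP k i g := by
  simp [SLP, DirectSum.decompose_add]

lemma X_mem (p : Fin 2 × Fin 2) : X p ∈ SLA k 1 := by
  have := isWeightedHomogeneous_X k SLw p
  simpa [SLw, mem_weightedHomogeneousSubmodule] using this

lemma C_mem (c : k) : C c ∈ SLA k 0 := isWeightedHomogeneous_C SLw c

lemma one_mem' : (1 : MvPolynomial (Fin 2 × Fin 2) k) ∈ SLA k 0 := isWeightedHomogeneous_one _ _

lemma XX_mem (p q : Fin 2 × Fin 2) : X p * X q ∈ SLA k 0 := by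
  have := SetLike.mul_mem_graded (X_mem k p) (X_mem k q)
  norm_num at this
  exact this

lemma SLP_mul_left {a : MvPolynomial (Fin 2 × Fin 2) k} (ha : a ∈ SLA k 0) (i f) :
    SLP k i (a * f) = a * SLP k i f := by
  have := DirectSum.coe_decompose_mul_add_of_left_mem (𝒜 := SLA k) (j := i) ha (b := f)
  rw [zero_add] at this
  exact this

lemma SLP_of_mem {a : MvPolynomial (Fin 2 × Fin 2) k} {i} (ha : a ∈ SLA k i) :
    SLP k i a = a := by
  simp [SLP, DirectSum.decompose_of_mem_same _ ha]

lemma SLP_sum (f) : SLP k 0 f + SLP k 1 f = f := by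
  classical
  have h := DirectSum.sum_support_decompose (SLA k) f
  have h1 : ∑ i : ZMod 2, ((DirectSum.decompose (SLA k) f i : MvPolynomial (Fin 2 × Fin 2) k)) = f := by
    conv_rhs => rw [← h]
    refine (Finset.sum_subset (f := fun i => ((DirectSum.decompose (SLA k) f i : MvPolynomial (Fin 2 × Fin 2) k))) (Finset.subset_univ _) ?_).symm
    intro x _ hx
    rw [DFinsupp.notMem_support_iff] at hx
    simp only [hx, Submodule.coe_zero]
  have h2 : ∀ g : ZMod 2 → MvPolynomial (Fin 2 × Fin 2) k, ∑ i : ZMod 2, g i = g 0 + g 1 := by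
    intro g
    rw [show (Finset.univ : Finset (ZMod 2)) = {0, 1} by rfl,
      Finset.sum_insert (by decide), Finset.sum_singleton]
  rw [h2] at h1
  exact h1

noncomputable def SLr : MvPolynomial (Fin 2 × Fin 2) k :=
  X (0,0) * X (1,1) - X (0,1) * X (1,0) - 1

lemma SLr_mem : SLr k ∈ SLA k 0 := by
  have h1 := XX_mem k (0,0) (1,1)
  have h2 := XX_mem k (0,1) (1,0)
  exact Submodule.sub_mem _ (Submodule.sub_mem _ h1 h2) (one_mem' k)

noncomputable def SLI : Ideal (MvPolynomial (Fin 2 × Fin 2) k) := Ideal.span {SLr k}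

lemma SLP_mem_I {f} (hf : f ∈ SLI k) (i) : SLP k i f ∈ SLI k := by
  rw [SLI, Ideal.mem_span_singleton] at hf ⊢
  obtain ⟨c, rfl⟩ := hf
  rw [SLP_mul_left k (SLr_mem k)]
  exact Dvd.intro _ rfl

lemma SLP_odd_stab (p : Fin 2 × Fin 2) (f) :
    SLP k 0 (X p * SLP k 1 f) = X p * SLP k 1 f := by
  refine SLP_of_mem k ?_
  have := SetLike.mul_mem_graded (X_mem k p) (SLP_mem k 1 f)
  norm_num at this
  exact this

lemma SLP_sub (i f g) : SLP k i (f - g) = SLP k i f - SLP k i g := by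
  simp [SLP, DirectSum.decompose_sub]


noncomputable def SLmk : MvPolynomial (Fin 2 × Fin 2) k →+* SL2CoordRing k :=
  Ideal.Quotient.mk (SLI k)

lemma SLmk_surj : Function.Surjective (SLmk k) := Ideal.Quotient.mk_surjective

noncomputable def SLQ (i : ZMod 2) (u : SL2CoordRing k) : SL2CoordRing k :=
  SLmk k (SLP k i (Function.surjInv (SLmk_surj k) u))

lemma SLmk_eq_iff (a b) : SLmk k a = SLmk k b ↔ a - b ∈ SLI k :=
  Ideal.Quotient.mk_eq_mk_iff_sub_mem a b

lemma SLQ_mk (i f) : SLQ k i (SLmk k f) = SLmk k (SLP k i f) := by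
  rw [SLQ, SLmk_eq_iff, ← SLP_sub]
  refine SLP_mem_I k ?_ i
  rw [← SLmk_eq_iff]
  exact Function.surjInv_eq (SLmk_surj k) (SLmk k f)

lemma SLQ_add (i u v) : SLQ k i (u + v) = SLQ k i u + SLQ k i v := by
  obtain ⟨f, rfl⟩ := SLmk_surj k u
  obtain ⟨g, rfl⟩ := SLmk_surj k v
  rw [← map_add, SLQ_mk, SLQ_mk, SLQ_mk, SLP_add, map_add]

lemma SLQ_sum (u) : SLQ k 0 u + SLQ k 1 u = u := by
  obtain ⟨f, rfl⟩ := SLmk_surj k u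
  rw [SLQ_mk, SLQ_mk, ← map_add, SLP_sum]

lemma sl2Gen_eq (p) : sl2Gen k p = SLmk k (X p) := rfl

lemma even_monomial_mem : ∀ (N : ℕ) (d : (Fin 2 × Fin 2) →₀ ℕ),
    (d.sum fun _ n => n) = 2 * N → SLmk k ((monomial d) 1) ∈ sl2EvenPart k := by
  intro N
  induction N with
  | zero =>
    intro d hd
    have hd0 : d = 0 := by
      ext p
      simp only [Finsupp.coe_zero, Pi.zero_apply]
      by_contra hp
      have hmem : p ∈ d.support := Finsupp.mem_support_iff.mpr hp
      have : d p ≤ d.sum fun _ n => n := Finset.single_le_sum (fun _ _ => Nat.zero_le _) hmem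
      omega
    subst hd0
    simpa [monomial_zero', map_one] using (sl2EvenPart k).one_mem
  | succ N ih =>
    intro d hd
    have hne : ∃ p, d p ≠ 0 := by
      by_contra h
      push_neg at h
      have : d = 0 := Finsupp.ext h
      subst this
      simp [Finsupp.sum_zero_index] at hd
    obtain ⟨p, hp⟩ := hne
    have key : ∃ q, (Finsupp.single p 1 + Finsupp.single q 1) ≤ d := by
      rcases le_or_gt 2 (d p) with h2 | h2
      · refine ⟨p, Finsupp.le_def.mpr fun r => ?_⟩
        simp only [Finsupp.add_apply, Finsupp.single_apply]
        split_ifs with h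
        · subst h; omega
        · omega
      · have hdp : d p = 1 := by omega
        have : ∃ q, q ≠ p ∧ d q ≠ 0 := by
          by_contra h
          push_neg at h
          have hds : d = Finsupp.single p 1 := by
            ext r
            rcases eq_or_ne r p with rfl | hr
            · simp [hdp]
            · rw [h r hr, Finsupp.single_apply, if_neg (fun hh => hr hh.symm)]
          rw [hds, Finsupp.sum_single_index] at hd
          · omega
          · rfl
        obtain ⟨q, hqp, hq⟩ := this
        refine ⟨q, Finsupp.le_def.mpr fun r => ?_⟩
        simp only [Finsupp.add_apply, Finsupp.single_apply]
        rcases eq_or_ne r p with rfl | hrp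
        · simp [hqp, hdp]
        · rcases eq_or_ne r q with rfl | hrq
          · simp [hrp, if_neg (Ne.symm hrp)]; omega
          · simp [if_neg (Ne.symm hrp), if_neg (Ne.symm hrq)]
    obtain ⟨q, he⟩ := key
    set e : (Fin 2 × Fin 2) →₀ ℕ := Finsupp.single p 1 + Finsupp.single q 1 with he'
    have hde : d = (d - e) + e := (tsub_add_cancel_of_le he).symm
    have hsum : ((d - e).sum fun _ n => n) = 2 * N := by
      have h1 : (d.sum fun _ n => n) = ((d - e).sum fun _ n => n) + (e.sum fun _ n => n) := by
        conv_lhs => rw [hde]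
        exact Finsupp.sum_add_index' (fun _ => rfl) (fun _ _ _ => rfl)
      have h2 : (e.sum fun _ n => n) = 2 := by
        rw [he', Finsupp.sum_add_index' (fun _ => rfl) (fun _ _ _ => rfl),
          Finsupp.sum_single_index rfl, Finsupp.sum_single_index rfl]
      omega
    have hmono : SLmk k ((monomial d) 1) =
        SLmk k ((monomial (d - e)) 1) * (sl2Gen k p * sl2Gen k q) := by
      have hXX : sl2Gen k p * sl2Gen k q = SLmk k ((monomial e) 1) := by
        rw [sl2Gen_eq, sl2Gen_eq, ← map_mul]
        congr 1
        rw [he', ← pow_one (X p : MvPolynomial (Fin 2 × Fin 2) k),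
          ← pow_one (X q : MvPolynomial (Fin 2 × Fin 2) k), X_pow_eq_monomial,
          X_pow_eq_monomial, monomial_mul, one_mul]
      rw [hXX, ← map_mul, monomial_mul, one_mul, ← hde]
    rw [hmono]
    exact mul_mem (ih _ hsum)
      (Algebra.subset_adjoin ⟨p, q, rfl⟩)

lemma SLP_eq_component (i f) : SLP k i f = weightedHomogeneousComponent SLw i f :=
  MvPolynomial.decompose'_apply k SLw f i

lemma SLQ0_mem (u) : SLQ k 0 u ∈ sl2EvenPart k := by
  obtain ⟨f, rfl⟩ := SLmk_surj k u
  rw [SLQ_mk, SLP_eq_component, weightedHomogeneousComponent_apply]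
  rw [map_sum]
  refine Subalgebra.sum_mem _ fun d hd => ?_
  simp only [Finset.mem_filter] at hd
  have heven : ∃ N, (d.sum fun _ n => n) = 2 * N := by
    have h0 : Finsupp.weight SLw d = 0 := hd.2
    have : ((d.sum fun _ n => n : ℕ) : ZMod 2) = 0 := by
      rw [← h0, Finsupp.weight_apply, Finsupp.sum, Finsupp.sum, Nat.cast_sum]
      refine Finset.sum_congr rfl fun r _ => ?_
      simp [SLw]
    rw [ZMod.natCast_eq_zero_iff] at this
    exact this
  obtain ⟨N, hN⟩ := heven
  have : (monomial d) (coeff d f) = C (coeff d f) * (monomial d) 1 := by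
    rw [C_mul_monomial, mul_one]
  rw [this, map_mul]
  exact mul_mem (by exact (sl2EvenPart k).algebraMap_mem (coeff d f))
    (even_monomial_mem k N d hN)

lemma SLQ_mul_XX (p q : Fin 2 × Fin 2) (i : ZMod 2) (u) :
    SLQ k i ((sl2Gen k p * sl2Gen k q) * u) = (sl2Gen k p * sl2Gen k q) * SLQ k i u := by
  obtain ⟨f, rfl⟩ := SLmk_surj k u
  rw [sl2Gen_eq, sl2Gen_eq, ← map_mul, ← map_mul, SLQ_mk, SLQ_mk,
    SLP_mul_left k (XX_mem k p q), map_mul, map_mul]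

lemma SLQ_mul_even {o} (ho : o ∈ sl2EvenPart k) (i : ZMod 2) :
    ∀ u, SLQ k i (o * u) = o * SLQ k i u := by
  induction ho using Algebra.adjoin_induction with
  | mem x hx =>
    obtain ⟨p, q, rfl⟩ := hx
    exact SLQ_mul_XX k p q i
  | algebraMap c =>
    intro u
    obtain ⟨f, rfl⟩ := SLmk_surj k u
    have halg : algebraMap k (SL2CoordRing k) c = SLmk k (C c) := rfl
    rw [halg, ← map_mul, SLQ_mk, SLQ_mk, SLP_mul_left k (C_mem k c), map_mul]
  | add x y hx hy hx' hy' =>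
    intro u
    rw [add_mul, SLQ_add, hx', hy', add_mul]
  | mul x y hx hy hx' hy' =>
    intro u
    rw [mul_assoc, hx', hy', mul_assoc]

lemma SLQ_odd_stab (p : Fin 2 × Fin 2) (u) :
    SLQ k 0 (sl2Gen k p * SLQ k 1 u) = sl2Gen k p * SLQ k 1 u := by
  obtain ⟨f, rfl⟩ := SLmk_surj k u
  rw [SLQ_mk, sl2Gen_eq, ← map_mul, SLQ_mk, SLP_odd_stab]

lemma SL_rel : sl2Gen k (0,0) * sl2Gen k (1,1) - sl2Gen k (0,1) * sl2Gen k (1,0) = 1 := by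
  have h : SLmk k (SLr k) = 0 :=
    Ideal.Quotient.eq_zero_iff_mem.mpr (Ideal.subset_span rfl)
  rw [SLr, map_sub, map_sub, map_mul, map_mul, map_one, sub_eq_zero] at h
  rw [sl2Gen_eq, sl2Gen_eq, sl2Gen_eq, sl2Gen_eq]
  exact h

lemma SLQ_one : SLQ k 0 1 = 1 := by
  have : (1 : SL2CoordRing k) = SLmk k 1 := rfl
  rw [this, SLQ_mk, SLP_of_mem k (one_mem' k)]

lemma smul_eq_coe_mul (o : sl2EvenPart k) (u : SL2CoordRing k) : o • u = ↑o * u :=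
  Algebra.smul_def o u

lemma SLQ_smul (i : ZMod 2) (o : sl2EvenPart k) (u) :
    SLQ k i (o • u) = ↑o * SLQ k i u := by
  rw [smul_eq_coe_mul, SLQ_mul_even k o.2 i u]

noncomputable def SLiMap : SL2CoordRing k →ₗ[(sl2EvenPart k)]
    ((sl2EvenPart k) × (sl2EvenPart k) × (sl2EvenPart k)) where
  toFun u := (⟨SLQ k 0 u, SLQ0_mem k u⟩,
    ⟨SLQ k 0 (sl2Gen k (1,1) * SLQ k 1 u), SLQ0_mem k _⟩,
    ⟨SLQ k 0 (sl2Gen k (1,0) * SLQ k 1 u), SLQ0_mem k _⟩)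
  map_add' u v := by
    refine Prod.ext (Subtype.ext ?_) (Prod.ext (Subtype.ext ?_) (Subtype.ext ?_)) <;>
        simp only [Prod.fst_add, Prod.snd_add] <;> push_cast
    · exact SLQ_add k 0 u v
    · rw [SLQ_add k 1, mul_add, SLQ_add k 0]
    · rw [SLQ_add k 1, mul_add, SLQ_add k 0]
  map_smul' o u := by
    refine Prod.ext (Subtype.ext ?_) (Prod.ext (Subtype.ext ?_) (Subtype.ext ?_)) <;>
        simp only [RingHom.id_apply, Prod.smul_fst, Prod.smul_snd, smul_eq_mul] <;> push_cast
    · exact SLQ_smul k 0 o u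
    · rw [SLQ_smul k 1 o u]
      have h : sl2Gen k (1,1) * (↑o * SLQ k 1 u) = ↑o * (sl2Gen k (1,1) * SLQ k 1 u) := by
        ring
      rw [h, SLQ_mul_even k o.2 0]
    · rw [SLQ_smul k 1 o u]
      have h : sl2Gen k (1,0) * (↑o * SLQ k 1 u) = ↑o * (sl2Gen k (1,0) * SLQ k 1 u) := by
        ring
      rw [h, SLQ_mul_even k o.2 0]

noncomputable def SLsMap : ((sl2EvenPart k) × (sl2EvenPart k) × (sl2EvenPart k))
    →ₗ[(sl2EvenPart k)] SL2CoordRing k where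
  toFun x := ↑x.1 + ↑x.2.1 * sl2Gen k (0,0) - ↑x.2.2 * sl2Gen k (0,1)
  map_add' x y := by
    simp only [Prod.fst_add, Prod.snd_add]
    push_cast
    ring
  map_smul' o x := by
    simp only [RingHom.id_apply, Prod.smul_fst, Prod.smul_snd, smul_eq_mul, smul_eq_coe_mul]
    push_cast
    ring

lemma SL_split : (SLsMap k).comp (SLiMap k) = LinearMap.id := by
  apply LinearMap.ext
  intro u
  simp only [LinearMap.comp_apply, LinearMap.id_apply, SLiMap, SLsMap, LinearMap.coe_mk,
    AddHom.coe_mk]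
  rw [SLQ_odd_stab, SLQ_odd_stab]
  have h1 := SL_rel k
  have h2 := SLQ_sum k u
  linear_combination (SLQ k 1 u) * h1 + h2

lemma SL_projective : Module.Projective (sl2EvenPart k) (SL2CoordRing k) :=
  Module.Projective.of_split (SLiMap k) (SLsMap k) (SL_split k)

theorem sl2_faithfullyFlat' :
    Module.FaithfullyFlat (sl2EvenPart k) (SL2CoordRing k) := by
  haveI := SL_projective k
  haveI hflat : Module.Flat (sl2EvenPart k) (SL2CoordRing k) := inferInstance
  refine ⟨fun m hm hmtop => ?_⟩
  let π : SL2CoordRing k →ₗ[(sl2EvenPart k)] (sl2EvenPart k) :=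
    (LinearMap.fst _ _ _).comp (SLiMap k)
  have hπ1 : π 1 = 1 := Subtype.ext (SLQ_one k)
  have h1 : (1 : sl2EvenPart k) ∈
      Submodule.map π (m • (⊤ : Submodule (sl2EvenPart k) (SL2CoordRing k))) := by
    rw [hmtop]
    exact ⟨1, trivial, hπ1⟩
  rw [Submodule.map_smul''] at h1
  have hle : m • (Submodule.map π ⊤) ≤ m • (⊤ : Submodule (sl2EvenPart k) (sl2EvenPart k)) :=
    smul_mono_right m le_top
  have hmm : m • (⊤ : Submodule (sl2EvenPart k) (sl2EvenPart k)) ≤ m :=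
    Submodule.smul_le.mpr fun r hr n _ => by
      simpa [smul_eq_mul] using m.mul_mem_right n hr
  exact hm.ne_top ((Ideal.eq_top_iff_one m).mpr (hmm (hle h1)))

end Aux

/-- Over an infinite field `k`, the coordinate ring `U = k[SL₂]` is a faithfully
flat module over its even part `O = U₀` (the coordinate ring of `PSL₂`). -/
theorem sl2_faithfullyFlat_over_evenPart (k : Type) [Field k] [Infinite k] :
    Module.FaithfullyFlat (sl2EvenPart k) (SL2CoordRing k) :=
  sl2_faithfullyFlat' k
end

section
/- Let R be a commutative Noetherian ring and P a finitely generated projective R-module such that P ⊕ R ≅ R^{n+1} where n > Krull dimension of R. Then P ≅ R^n. -/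
/-!
Write the image of `(0, 1)` under `P × R ≃ Rⁿ × R` as `(v, b)`; its entries generate the unit
ideal. Choosing the multiples `b • x` one coordinate at a time by prime avoidance, every prime
that contains the first `k` entries of `v + b • x` but not `b` has height at least `k`. So once
`n > dim R`, the entries of `v + b • x` alone generate the unit ideal (a maximal ideal containing
them and `b` would contain all of `v` and `b`). Transvections then carry `(v, b)` to
`(v + b • x, b)`, `(v + b • x, 1)` and `(0, 1)`, and an automorphism of `Rⁿ × R` fixing `(0, 1)`
identifies the quotients `P` and `Rⁿ` by the second factor.
-/

variable {R : Type*} [CommRing R]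

theorem Ideal.exists_add_mul_notMem_of_isAntichain {S : Finset (Ideal R)}
    (hS : ∀ p ∈ S, p.IsPrime) (hanti : IsAntichain (· ≤ ·) (S : Set (Ideal R)))
    {b : R} (hb : ∀ p ∈ S, b ∉ p) (a : R) : ∃ x, ∀ p ∈ S, a + b * x ∉ p := by
  classical
  -- `y` lies in the primes of `S` that miss `a` and in none of those that contain `a`.
  obtain ⟨y, hy_mem, hy_notMem⟩ :
      ∃ y ∈ (S.filter (a ∉ ·)).inf id, ∀ p ∈ S.filter (a ∈ ·), y ∉ p := by
    by_contra! h
    obtain ⟨p, hp, hle⟩ := (Ideal.subset_union_prime ⊥ ⊥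
      fun p hp _ _ ↦ hS p (Finset.mem_filter.1 hp).1).1 fun y hy ↦ by
        obtain ⟨p, hp, hyp⟩ := h y hy
        exact Set.mem_biUnion hp hyp
    rw [Finset.mem_filter] at hp
    obtain ⟨q, hq, hqp⟩ := ((hS p hp.1).inf_le').1 hle
    rw [Finset.mem_filter] at hq
    exact hq.2 (hanti.eq hq.1 hp.1 hqp ▸ hp.2)
  refine ⟨y, fun p hp hmem ↦ ?_⟩
  have hp_prime := hS p hp
  by_cases ha : a ∈ p
  · have hby : b * y ∈ p := (p.add_mem_iff_right ha).1 hmem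
    exact (hp_prime.mem_or_mem hby).elim (hb p hp) (hy_notMem p (Finset.mem_filter.2 ⟨hp, ha⟩))
  · have hy : y ∈ p := Finset.inf_le (f := id) (Finset.mem_filter.2 ⟨hp, ha⟩) hy_mem
    exact ha ((p.add_mem_iff_left (p.mul_mem_left b hy)).1 hmem)

theorem exists_card_le_height_of_span_add_smul_le [IsNoetherianRing R] {ι : Type*}
    (b : R) (a : ι → R) (s : Finset ι) :
    ∃ x : ι → R, ∀ q : Ideal R, q.IsPrime → Ideal.span ((a + b • x) '' s) ≤ q → b ∉ q →
      (s.card : ℕ∞) ≤ q.height := by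
  classical
  induction s using Finset.induction_on with
  | empty => exact ⟨0, by simp⟩
  | insert j s hj ih =>
    obtain ⟨x, hx⟩ := ih
    set I := Ideal.span ((a + b • x) '' s)
    have hT : {p ∈ I.minimalPrimes | b ∉ p}.Finite :=
      (I.finite_minimalPrimes_of_isNoetherianRing R).subset (Set.sep_subset _ _)
    obtain ⟨c, hc⟩ := Ideal.exists_add_mul_notMem_of_isAntichain (S := hT.toFinset)
      (fun p hp ↦ (hT.mem_toFinset.1 hp).1.isPrime)
      (by simpa using (setOfPred_minimal_antichain _).subset (Set.sep_subset I.minimalPrimes _))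
      (fun p hp ↦ (hT.mem_toFinset.1 hp).2) (a j)
    refine ⟨Function.update x j c, fun q hq hle hbq ↦ ?_⟩
    have himg : (a + b • Function.update x j c) '' ↑(insert j s) =
        insert (a j + b * c) ((a + b • x) '' s) := by
      rw [Finset.coe_insert, Set.image_insert_eq]
      congr 1
      · simp
      · refine Set.image_congr fun i hi ↦ ?_
        simp [Function.update_of_ne (ne_of_mem_of_not_mem hi hj)]
    rw [himg, Ideal.span_insert, sup_le_iff, Ideal.span_singleton_le_iff_mem] at hle
    obtain ⟨p, hp, hpq⟩ := Ideal.exists_minimalPrimes_le hle.2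
    have hp_prime := hp.isPrime
    have hbp : b ∉ p := fun h ↦ hbq (hpq h)
    have hpq' : p < q := lt_of_le_of_ne hpq fun h ↦
      hc p (hT.mem_toFinset.2 ⟨hp, hbp⟩) (h ▸ hle.1)
    calc ((insert j s).card : ℕ∞) = s.card + 1 := by simp [hj]
      _ ≤ p.height + 1 := by gcongr; exact hx p hp_prime hp.le hbp
      _ ≤ q.height := Ideal.height_add_one_le_of_lt_of_isPrime hpq'

theorem exists_span_range_add_smul_eq_top [IsNoetherianRing R] {ι : Type*} [Fintype ι]
    (hdim : ringKrullDim R < Fintype.card ι) {b : R} {a : ι → R}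
    (h : Ideal.span (insert b (Set.range a)) = ⊤) :
    ∃ x : ι → R, Ideal.span (Set.range (a + b • x)) = ⊤ := by
  obtain ⟨x, hx⟩ := exists_card_le_height_of_span_add_smul_le b a Finset.univ
  rw [Finset.coe_univ, Set.image_univ] at hx
  refine ⟨x, by_contra fun hne ↦ ?_⟩
  obtain ⟨m, hm, hle⟩ := Ideal.exists_le_maximal _ hne
  by_cases hbm : b ∈ m
  · refine hm.ne_top (top_le_iff.1 (h ▸ Ideal.span_le.2 ?_))
    rintro _ (rfl | ⟨i, rfl⟩)
    · exact hbm
    · have hi : a i + b * x i ∈ m := hle (Ideal.subset_span ⟨i, rfl⟩)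
      exact (m.add_mem_iff_left (m.mul_mem_right _ hbm)).1 hi
  · have hcard := hx m hm.isPrime hle hbm
    have hdim' := m.height_le_ringKrullDim_of_ne_top hm.ne_top
    rw [Finset.card_univ] at hcard
    exact hdim.not_ge ((WithBot.coe_le_coe.2 hcard).trans hdim')

theorem Ideal.span_insert_range_eq_top_of_apply_eq_one {ι : Type*} [Fintype ι] [DecidableEq ι]
    {v : ι → R} {b : R} (φ : Module.Dual R ((ι → R) × R)) (hφ : φ (v, b) = 1) :
    Ideal.span (insert b (Set.range v)) = ⊤ := by
  have hsplit : (v, b) = LinearMap.inl R _ R v + b • ((0 : ι → R), (1 : R)) := by simp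
  rw [Ideal.eq_top_iff_one, ← hφ, hsplit, map_add, map_smul, ← LinearMap.comp_apply,
    LinearMap.pi_apply_eq_sum_univ (φ ∘ₗ LinearMap.inl R _ R) v]
  refine add_mem (Ideal.sum_mem _ fun i _ ↦ ?_) ?_
  · exact Ideal.mul_mem_right _ _ (Ideal.subset_span (Set.mem_insert_of_mem _ ⟨i, rfl⟩))
  · exact Ideal.mul_mem_right _ _ (Ideal.subset_span (Set.mem_insert _ _))

theorem exists_dual_apply_eq_one_of_span_range_eq_top {ι : Type*} [Fintype ι] {v : ι → R}
    (h : Ideal.span (Set.range v) = ⊤) : ∃ f : Module.Dual R (ι → R), f v = 1 := by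
  obtain ⟨c, hc⟩ := Ideal.mem_span_range_iff_exists_fun.1 (h ▸ Submodule.mem_top : (1 : R) ∈ _)
  exact ⟨∑ i, c i • LinearMap.proj i, by simpa using hc⟩

theorem exists_linearEquiv_apply_eq_zero_one {M : Type*} [AddCommGroup M] [Module R M]
    {m : M} {f : Module.Dual R M} (hf : f m = 1) (b : R) :
    ∃ g : (M × R) ≃ₗ[R] (M × R), g (m, b) = (0, 1) := by
  let setLast := LinearEquiv.transvection (f := (1 - b) • f ∘ₗ LinearMap.fst R M R)
    (v := ((0 : M), (1 : R))) (by simp)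
  let clearFirst := LinearEquiv.transvection (f := LinearMap.snd R M R) (v := (-m, (0 : R)))
    (LinearMap.snd_apply _)
  refine ⟨setLast.trans clearFirst, ?_⟩
  simp only [LinearEquiv.trans_apply, setLast, clearFirst, LinearEquiv.transvection.apply]
  simp [hf]

theorem exists_linearEquiv_apply_eq_zero_one_of_span_eq_top [IsNoetherianRing R] {ι : Type*}
    [Fintype ι] (hdim : ringKrullDim R < Fintype.card ι) {v : ι → R} {b : R}
    (h : Ideal.span (insert b (Set.range v)) = ⊤) :
    ∃ g : ((ι → R) × R) ≃ₗ[R] ((ι → R) × R), g (v, b) = (0, 1) := by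
  obtain ⟨x, hx⟩ := exists_span_range_add_smul_eq_top hdim h
  obtain ⟨f, hf⟩ := exists_dual_apply_eq_one_of_span_range_eq_top hx
  obtain ⟨g, hg⟩ := exists_linearEquiv_apply_eq_zero_one hf b
  let shift := LinearEquiv.transvection (f := LinearMap.snd R (ι → R) R) (v := (x, (0 : R)))
    (LinearMap.snd_apply _)
  refine ⟨shift.trans g, ?_⟩
  simp only [LinearEquiv.trans_apply, shift, LinearEquiv.transvection.apply]
  simpa using hg

theorem nonempty_linearEquiv_of_prod_linearEquiv_apply_zero_one {P M : Type*} [AddCommGroup P]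
    [Module R P] [AddCommGroup M] [Module R M] (g : (P × R) ≃ₗ[R] (M × R))
    (hg : g (0, 1) = (0, 1)) : Nonempty (P ≃ₗ[R] M) := by
  have hinr : g.toLinearMap ∘ₗ LinearMap.inr R P R = LinearMap.inr R M R :=
    LinearMap.ext_ring (by simpa using hg)
  have hker : (LinearMap.ker (LinearMap.fst R P R)).map g.toLinearMap =
      LinearMap.ker (LinearMap.fst R M R) := by
    rw [LinearMap.ker_fst, LinearMap.ker_fst, ← LinearMap.range_comp, hinr]
  exact ⟨((LinearMap.fst R P R).quotKerEquivOfSurjective LinearMap.fst_surjective).symm ≪≫ₗ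
    Submodule.Quotient.equiv _ _ g hker ≪≫ₗ
    (LinearMap.fst R M R).quotKerEquivOfSurjective LinearMap.fst_surjective⟩

theorem free_of_stablyFree_corank_one_general (R : Type) [CommRing R] [IsNoetherianRing R]
    (P : Type) [AddCommGroup P] [Module R P]
    (n : ℕ) (h : Nonempty ((P × R) ≃ₗ[R] (Fin (n + 1) → R)))
    (hgt : ringKrullDim R < n) :
    Nonempty (P ≃ₗ[R] (Fin n → R)) := by
  obtain ⟨e⟩ := h
  let e' : (P × R) ≃ₗ[R] (Fin n → R) × R :=
    e ≪≫ₗ (Fin.consLinearEquiv R fun _ ↦ R).symm ≪≫ₗ LinearEquiv.prodComm R R _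
  have hunimod := Ideal.span_insert_range_eq_top_of_apply_eq_one
    (v := (e' (0, 1)).1) (b := (e' (0, 1)).2) (LinearMap.snd R P R ∘ₗ e'.symm.toLinearMap) (by simp)
  obtain ⟨g, hg⟩ := exists_linearEquiv_apply_eq_zero_one_of_span_eq_top
    (by simpa using hgt) hunimod
  exact nonempty_linearEquiv_of_prod_linearEquiv_apply_zero_one (e' ≪≫ₗ g) (by simpa using hg)

/-- Bass cancellation for corank-1 stably free modules: if `R` is a commutative
Noetherian ring and `P` is a finitely generated projective `R`-module with
`P ⊕ R ≅ R^{n+1}` where `n` exceeds the Krull dimension of `R`, then `P ≅ Rⁿ`. -/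
theorem free_of_stablyFree_corank_one (R : Type) [CommRing R] [IsNoetherianRing R]
    (P : Type) [AddCommGroup P] [Module R P] [Module.Finite R P] [Module.Projective R P]
    (n : ℕ) (h : Nonempty ((P × R) ≃ₗ[R] (Fin (n + 1) → R)))
    (hgt : ringKrullDim R < n) :
    Nonempty (P ≃ₗ[R] (Fin n → R)) :=
  free_of_stablyFree_corank_one_general R P n h hgt
end
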